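/- arXiv:1003.4897 — 3 statements merged into one kernel-verified Lean document; each statement's English description precedes it below -/
import Mathlib

section
/- Let N ≥ 1, let α₁, …, α_N ∈ ℂ be pairwise distinct, and let q₁, …, q_N ∈ ℂ[X, Y] be polynomials in two variables, not all identically zero. Define Q : ℂ → ℂ by Q(λ) = Σ_{k=1}^N q_k(λ, conj(λ))·exp(λ·α_k − conj(λ)·conj(α_k)) (each exponent is purely imaginary, so every exponential factor has modulus 1). Then for every ε > 0 there exists a constant C > 0 such that for every λ ∈ ℂ one has sup_{λ' ∈ ℂ, |λ'−λ| ≤ ε} |Q(λ')| ≥ 1/C. -/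
/-!
Translating by `λ` rewrites `Q (λ + z)` as an exponential polynomial in `z` of the same kind whose
polynomial coefficients are the translates of the `q k` multiplied by the unimodular factors
`exp (λ α_k - conj λ conj α_k)`; translation preserves the total degree and the top-degree
coefficients, so one fixed coefficient has the same modulus `ρ > 0` for every `λ`.
Restriction to the disc `|z| ≤ ε` is injective on the finite-dimensional space of such
exponential polynomials of bounded degree, hence that coefficient is bounded by a constant
times the supremum over the disc, and this constant does not depend on `λ`.
-/

theorem Finsupp.exists_eq_add_single_one_of_mem_support {σ : Type*} {n : σ →₀ ℕ} {i : σ}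
    (hi : i ∈ n.support) : ∃ n', n = n' + Finsupp.single i 1 :=
  ⟨n - Finsupp.single i 1, (tsub_add_cancel_of_le <| by
    simpa [Finsupp.single_le_iff, Nat.one_le_iff_ne_zero] using hi).symm⟩

namespace MvPolynomial

variable {R σ : Type*} [CommSemiring R] (v : σ → R)

theorem coeff_aeval_X_add_C_monomial_one {n m : σ →₀ ℕ} (h : n.degree ≤ m.degree) :
    coeff m (aeval (fun i => X i + C (v i)) (monomial n (1 : R))) =
      coeff m (monomial n (1 : R)) := by
  classical
  obtain ⟨k, hk⟩ : ∃ k, n.degree = k := ⟨_, rfl⟩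
  induction k generalizing n m with
  | zero => simp [(Finsupp.degree_eq_zero_iff n).mp hk]
  | succ k ih =>
    obtain ⟨i, hi⟩ : ∃ i, i ∈ n.support := by
      by_contra! hn
      simp [Finsupp.support_eq_empty.mp (Finset.eq_empty_of_forall_notMem hn)] at hk
    obtain ⟨n, rfl⟩ := Finsupp.exists_eq_add_single_one_of_mem_support hi
    rw [map_add, Finsupp.degree_single] at hk h
    have hlow : coeff m (aeval (fun i => X i + C (v i)) (monomial n (1 : R))) = 0 := by
      rw [ih (by omega) (by omega), coeff_monomial, if_neg]
      rintro rfl; omega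
    rw [← mul_one (1 : R), ← monomial_mul, ← X, map_mul, aeval_X, mul_add, coeff_add,
      mul_comm _ (C _), coeff_C_mul, hlow, mul_zero, add_zero, coeff_mul_X', coeff_mul_X']
    split_ifs with hmi
    · obtain ⟨m, rfl⟩ := Finsupp.exists_eq_add_single_one_of_mem_support hmi
      rw [map_add, Finsupp.degree_single] at h
      simpa using ih (m := m) (by omega) (by omega)
    · rfl

theorem coeff_aeval_X_add_C {P : MvPolynomial σ R} {m : σ →₀ ℕ}
    (h : P.totalDegree ≤ m.degree) :
    coeff m (aeval (fun i => X i + C (v i)) P) = coeff m P := by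
  conv_lhs => rw [P.as_sum]
  conv_rhs => rw [P.as_sum]
  simp only [map_sum, coeff_sum]
  refine Finset.sum_congr rfl fun n hn => ?_
  rw [← mul_one (coeff n P), ← C_mul_monomial, map_mul, aeval_C, algebraMap_eq, coeff_C_mul,
    coeff_C_mul, coeff_aeval_X_add_C_monomial_one v ((le_totalDegree hn).trans h)]

theorem totalDegree_aeval_X_add_C_le (P : MvPolynomial σ R) :
    (aeval (fun i => X i + C (v i)) P).totalDegree ≤ P.totalDegree := by
  refine Finset.sup_le fun m hm => ?_
  by_contra! hlt
  rw [mem_support_iff, coeff_aeval_X_add_C v hlt.le] at hm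
  exact hm (coeff_eq_zero_of_totalDegree_lt hlt)

theorem eval_aeval_X_add_C (P : MvPolynomial σ R) (x : σ → R) :
    eval x (aeval (fun i => X i + C (v i)) P) = eval (x + v) P := by
  change (aeval x).comp (aeval fun i => X i + C (v i)) P = aeval (x + v) P
  rw [comp_aeval]
  simp only [aeval_eq_eval, map_add, eval_X, eval_C]
  rfl

end MvPolynomial

theorem LinearMap.exists_norm_le_mul_norm_of_injective {𝕜 E F G : Type*}
    [NontriviallyNormedField 𝕜] [CompleteSpace 𝕜] [AddCommGroup E] [Module 𝕜 E]
    [FiniteDimensional 𝕜 E] [NormedAddCommGroup F] [NormedSpace 𝕜 F]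
    [NormedAddCommGroup G] [NormedSpace 𝕜 G] {T : E →ₗ[𝕜] F} (hT : Function.Injective T)
    (φ : E →ₗ[𝕜] G) : ∃ C > 0, ∀ x, ‖φ x‖ ≤ C * ‖T x‖ := by
  set e := LinearEquiv.ofInjective T hT
  set ψ : T.range →L[𝕜] G := LinearMap.toContinuousLinearMap (φ ∘ₗ e.symm.toLinearMap)
  refine ⟨‖ψ‖ + 1, by positivity, fun x => ?_⟩
  calc ‖φ x‖ = ‖ψ (e x)‖ := by simp [ψ]
    _ ≤ ‖ψ‖ * ‖T x‖ := ψ.le_opNorm _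
    _ ≤ (‖ψ‖ + 1) * ‖T x‖ := by gcongr; linarith

open Complex ComplexConjugate Filter Topology

section EntireFunctions

open Polynomial

def entireFunctions : Submodule ℂ (ℂ → ℂ) where
  carrier := {f | Differentiable ℂ f}
  add_mem' hf hg := hf.add hg
  zero_mem' := differentiable_const 0
  smul_mem' c _ hf := hf.const_smul c

namespace entireFunctions

noncomputable def derivEnd : Module.End ℂ entireFunctions where
  toFun f := ⟨deriv f, f.2.deriv⟩
  map_add' f g := Subtype.ext <| funext fun z => deriv_add (f.2 z) (g.2 z)
  map_smul' c f := Subtype.ext <| funext fun z => deriv_const_smul c (f.2 z)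

noncomputable def polyMulExp (p : ℂ[X]) (β : ℂ) : entireFunctions :=
  ⟨fun z => p.eval z * exp (z * β), show Differentiable ℂ _ by fun_prop⟩

theorem derivEnd_sub_smul_polyMulExp (p : ℂ[X]) (β : ℂ) :
    (derivEnd - β • 1) (polyMulExp p β) = polyMulExp (derivative p) β := by
  ext z
  have h := (p.hasDerivAt z).fun_mul (hasDerivAt_mul_const β).cexp
  simp only [derivEnd, polyMulExp, LinearMap.sub_apply, LinearMap.coe_mk, AddHom.coe_mk,
    LinearMap.smul_apply, Module.End.one_apply, AddSubgroupClass.coe_sub, SetLike.val_smul,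
    Pi.sub_apply, h.deriv, Pi.smul_apply, smul_eq_mul]
  ring

theorem polyMulExp_mem_maxGenEigenspace (p : ℂ[X]) (β : ℂ) :
    polyMulExp p β ∈ derivEnd.maxGenEigenspace β := by
  have iter : ∀ n, ((derivEnd - β • 1) ^ n) (polyMulExp p β) =
      polyMulExp (derivative^[n] p) β := by
    intro n
    induction n with
    | zero => rfl
    | succ n ih =>
      rw [pow_succ', Module.End.mul_apply, ih, derivEnd_sub_smul_polyMulExp,
        Function.iterate_succ_apply']
  refine (Module.End.mem_maxGenEigenspace _ _ _).mpr ⟨p.natDegree + 1, ?_⟩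
  rw [iter, iterate_derivative_eq_zero (Nat.lt_succ_self _)]
  ext z
  simp [polyMulExp]

end entireFunctions

open entireFunctions in
/-- `p(z) e^{βz}` is a generalised eigenvector of `d/dz` with eigenvalue `β`, and generalised
eigenspaces for distinct eigenvalues are independent. -/
theorem Polynomial.eq_zero_of_sum_eval_mul_exp {ι : Type*} [Fintype ι] {β : ι → ℂ}
    (hβ : Function.Injective β) {p : ι → ℂ[X]}
    (h : ∀ z, ∑ k, (p k).eval z * exp (z * β k) = 0) (k : ι) : p k = 0 := by
  have hsum : ∑ k, polyMulExp (p k) (β k) = 0 := by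
    ext z
    simpa [polyMulExp] using h z
  have := (iSupIndep_iff_finsetSum_eq_zero_imp_eq_zero _).mp
    ((Module.End.independent_maxGenEigenspace derivEnd).comp hβ) Finset.univ
    (fun k => polyMulExp (p k) (β k)) (fun k _ => polyMulExp_mem_maxGenEigenspace _ _) hsum k
    (Finset.mem_univ k)
  refine Polynomial.funext fun z => ?_
  simpa [polyMulExp, exp_ne_zero] using
    congrArg (fun f : entireFunctions => (f : ℂ → ℂ) z) this

end EntireFunctions

theorem Differentiable.eq_zero_of_eventually_ofReal {f : ℂ → ℂ} (hf : Differentiable ℂ f)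
    (h : ∀ᶠ t : ℝ in 𝓝 0, f t = 0) (z : ℂ) : f z = 0 := by
  have hofReal : Tendsto ((↑) : ℝ → ℂ) (𝓝[≠] 0) (𝓝[≠] 0) := by
    simpa using continuous_ofReal.continuousWithinAt.tendsto_nhdsWithin
      (fun t (ht : t ∈ ({0}ᶜ : Set ℝ)) => ofReal_ne_zero.mpr ht) (x := 0)
  have hfreq : ∃ᶠ w in 𝓝[≠] (0 : ℂ), f w = 0 :=
    hofReal.frequently (h.filter_mono nhdsWithin_le_nhds).frequently
  exact (hf.differentiableOn.analyticOnNhd isOpen_univ)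
    |>.eqOn_zero_of_preconnected_of_frequently_eq_zero isPreconnected_univ (Set.mem_univ 0) hfreq
    (Set.mem_univ z)

/-- In the coordinates `z = x + iy`, `w = x - iy` the set `w = conj z` is the real slice `ℝ²`,
which is a uniqueness set for functions holomorphic in `x` and in `y` separately. -/
theorem Differentiable.eq_zero_of_eventually_eq_zero_conj {F : ℂ × ℂ → ℂ}
    (hF : Differentiable ℂ F) (h : ∀ᶠ z in 𝓝 0, F (z, conj z) = 0) (p : ℂ × ℂ) : F p = 0 := by
  set K : ℂ → ℂ → ℂ := fun x y => F (x + I * y, x - I * y)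
  have hK₁ : ∀ y, Differentiable ℂ (K · y) := fun y => hF.comp (by fun_prop)
  have hK₂ : ∀ x, Differentiable ℂ (K x) := fun x => hF.comp (by fun_prop)
  have hreal : ∀ᶠ q : ℝ × ℝ in 𝓝 (0, 0), K q.1 q.2 = 0 := by
    have hg : Tendsto (fun q : ℝ × ℝ => (q.1 : ℂ) + I * q.2) (𝓝 (0, 0)) (𝓝 0) :=
      (by fun_prop : Continuous fun q : ℝ × ℝ => (q.1 : ℂ) + I * q.2).tendsto' _ _ (by simp)
    filter_upwards [hg.eventually h] with q hq
    simpa [K, sub_eq_add_neg, conj_ofReal] using hq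
  rw [nhds_prod_eq, eventually_prod_iff] at hreal
  obtain ⟨pa, hpa, pb, hpb, hK⟩ := hreal
  have hrow : ∀ y : ℝ, pb y → ∀ x, K x y = 0 := fun y hy =>
    (hK₁ y).eq_zero_of_eventually_ofReal (hpa.mono fun x hx => hK hx hy)
  have hall : ∀ x y, K x y = 0 := fun x =>
    (hK₂ x).eq_zero_of_eventually_ofReal (hpb.mono fun y hy => hrow y hy x)
  obtain ⟨z, w⟩ := p
  convert hall ((z + w) / 2) ((z - w) / (2 * I)) using 2
  ext <;> field_simp <;> ring

open MvPolynomial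

section ExpPoly

variable {ι : Type*} [Fintype ι]

noncomputable def mvExpPoly (α β : ι → ℂ) (P : ι → MvPolynomial (Fin 2) ℂ) (p : ℂ × ℂ) : ℂ :=
  ∑ k, eval ![p.1, p.2] (P k) * exp (p.1 * α k - p.2 * β k)

theorem differentiable_mvExpPoly (α β : ι → ℂ) (P : ι → MvPolynomial (Fin 2) ℂ) :
    Differentiable ℂ (mvExpPoly α β P) := by
  have heval (Q : MvPolynomial (Fin 2) ℂ) :
      Differentiable ℂ fun p : ℂ × ℂ => eval ![p.1, p.2] Q :=
    (differentiableOn_univ.mp (AnalyticOnNhd.eval_mvPolynomial Q).differentiableOn).comp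
      (differentiable_pi.mpr fun i => by fin_cases i <;> simp)
  unfold mvExpPoly
  fun_prop

theorem eq_zero_of_forall_mvExpPoly_eq_zero {α : ι → ℂ} (hα : Function.Injective α) (β : ι → ℂ)
    {P : ι → MvPolynomial (Fin 2) ℂ} (h : ∀ p, mvExpPoly α β P p = 0) : P = 0 := by
  have hslice : ∀ w k, (finSuccEquiv ℂ 1 (P k)).map (eval ![w]) = 0 := by
    intro w
    have := Polynomial.eq_zero_of_sum_eval_mul_exp hα
      (p := fun k => .C (exp (-(w * β k))) * (finSuccEquiv ℂ 1 (P k)).map (eval ![w]))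
      fun z => by
        rw [← h (z, w), mvExpPoly]
        refine Finset.sum_congr rfl fun k _ => ?_
        rw [Polynomial.eval_mul, Polynomial.eval_C, ← eval_eq_eval_mv_eval', sub_eq_add_neg,
          exp_add]
        -- `![z, w]` is the `Fin.cons z ![w]` of `eval_eq_eval_mv_eval'` only up to unfolding
        simp only [Matrix.vecCons]
        ring
    intro k
    simpa [exp_ne_zero] using this k
  funext k
  apply (finSuccEquiv ℂ 1).injective
  ext i : 1
  refine MvPolynomial.funext fun x => ?_
  have hx : ![x 0] = x := by ext j; fin_cases j; rfl
  simpa [hx] using congrArg (Polynomial.coeff · i) (hslice (x 0) k)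

noncomputable def conjExpPoly (α : ι → ℂ) (P : ι → MvPolynomial (Fin 2) ℂ) (z : ℂ) : ℂ :=
  mvExpPoly α (conj ∘ α) P (z, conj z)

theorem continuous_conjExpPoly (α : ι → ℂ) (P : ι → MvPolynomial (Fin 2) ℂ) :
    Continuous (conjExpPoly α P) :=
  (differentiable_mvExpPoly _ _ P).continuous.comp (by fun_prop)

theorem eq_zero_of_eventually_conjExpPoly_eq_zero {α : ι → ℂ} (hα : Function.Injective α)
    {P : ι → MvPolynomial (Fin 2) ℂ} (h : ∀ᶠ z in 𝓝 0, conjExpPoly α P z = 0) : P = 0 :=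
  eq_zero_of_forall_mvExpPoly_eq_zero hα _ <|
    (differentiable_mvExpPoly α (conj ∘ α) P).eq_zero_of_eventually_eq_zero_conj h

end ExpPoly

section ExpPolyShift

variable {ι : Type*}

noncomputable def conjExpPolyShift (α : ι → ℂ) (P : ι → MvPolynomial (Fin 2) ℂ) (c : ℂ) :
    ι → MvPolynomial (Fin 2) ℂ :=
  fun k => exp (c * α k - conj c * conj (α k)) • aeval (fun i => X i + C (![c, conj c] i)) (P k)

theorem conjExpPoly_add [Fintype ι] (α : ι → ℂ) (P : ι → MvPolynomial (Fin 2) ℂ) (c z : ℂ) :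
    conjExpPoly α P (c + z) = conjExpPoly α (conjExpPolyShift α P c) z := by
  unfold conjExpPoly mvExpPoly conjExpPolyShift
  refine Finset.sum_congr rfl fun k _ => ?_
  have hpt : ![z, conj z] + ![c, conj c] = ![c + z, conj (c + z)] := by
    ext i; fin_cases i <;> simp [add_comm]
  simp only [smul_eval, eval_aeval_X_add_C, hpt, Function.comp_apply, map_add]
  rw [mul_right_comm, ← exp_add]
  ring_nf

theorem totalDegree_conjExpPolyShift_le (α : ι → ℂ) (P : ι → MvPolynomial (Fin 2) ℂ) (c : ℂ)
    (k : ι) : (conjExpPolyShift α P c k).totalDegree ≤ (P k).totalDegree :=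
  (totalDegree_smul_le _ _).trans (totalDegree_aeval_X_add_C_le _ _)

theorem norm_coeff_conjExpPolyShift (α : ι → ℂ) (P : ι → MvPolynomial (Fin 2) ℂ) (c : ℂ)
    {k : ι} {m : Fin 2 →₀ ℕ} (h : (P k).totalDegree ≤ m.degree) :
    ‖coeff m (conjExpPolyShift α P c k)‖ = ‖coeff m (P k)‖ := by
  rw [conjExpPolyShift, coeff_smul, coeff_aeval_X_add_C _ h, smul_eq_mul, norm_mul, ← map_mul,
    sub_conj, norm_exp_ofReal_mul_I, one_mul]

theorem exists_norm_coeff_le_of_norm_conjExpPoly_le [Fintype ι] {α : ι → ℂ}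
    (hα : Function.Injective α) {ε : ℝ} (hε : 0 < ε) (D : ℕ) (k₀ : ι) (m₀ : Fin 2 →₀ ℕ) :
    ∃ C > 0, ∀ P : ι → MvPolynomial (Fin 2) ℂ, (∀ k, (P k).totalDegree ≤ D) →
      ∀ M, (∀ z, ‖z‖ ≤ ε → ‖conjExpPoly α P z‖ ≤ M) → ‖coeff m₀ (P k₀)‖ ≤ C * M := by
  have : CompactSpace (Metric.closedBall (0 : ℂ) ε) :=
    isCompact_iff_compactSpace.mp (isCompact_closedBall _ _)
  let T : (ι → restrictTotalDegree (Fin 2) ℂ D) →ₗ[ℂ] C(Metric.closedBall (0 : ℂ) ε, ℂ) :=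
    { toFun P := ⟨fun z => conjExpPoly α (fun k => P k) z,
        (continuous_conjExpPoly α _).comp continuous_subtype_val⟩
      map_add' P Q := by
        ext z
        simp [conjExpPoly, mvExpPoly, add_mul, Finset.sum_add_distrib]
      map_smul' c P := by
        ext z
        simp [conjExpPoly, mvExpPoly, Finset.mul_sum, mul_assoc] }
  have hT : Function.Injective T := by
    refine (injective_iff_map_eq_zero T).mpr fun P hP => funext fun k => Subtype.ext ?_
    refine congrFun (eq_zero_of_eventually_conjExpPoly_eq_zero hα (P := fun k => P k) ?_) k
    filter_upwards [Metric.closedBall_mem_nhds 0 hε] with z hz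
    exact congrArg (fun f : C(Metric.closedBall (0 : ℂ) ε, ℂ) => f ⟨z, hz⟩) hP
  let φ := lcoeff ℂ m₀ ∘ₗ (restrictTotalDegree (Fin 2) ℂ D).subtype ∘ₗ
    (LinearMap.proj k₀ : (ι → restrictTotalDegree (Fin 2) ℂ D) →ₗ[ℂ] _)
  obtain ⟨C, hC, hφ⟩ := LinearMap.exists_norm_le_mul_norm_of_injective hT φ
  refine ⟨C, hC, fun P hP M hM => ?_⟩
  have hM₀ : 0 ≤ M := (norm_nonneg _).trans (hM 0 (by simp [hε.le]))
  let P' : ι → restrictTotalDegree (Fin 2) ℂ D :=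
    fun k => ⟨P k, (mem_restrictTotalDegree _ _ _).mpr (hP k)⟩
  calc ‖coeff m₀ (P k₀)‖ ≤ C * ‖T P'‖ := hφ P'
    _ ≤ C * M := by
        gcongr
        exact (ContinuousMap.norm_le _ hM₀).mpr fun z => hM z (mem_closedBall_zero_iff.mp z.2)

end ExpPolyShift

theorem exponential_polynomial_purely_imaginary_uniform_lower_bound_general
    (N : ℕ) (α : Fin N → ℂ) (hα : Function.Injective α)
    (q : Fin N → MvPolynomial (Fin 2) ℂ) (hq : ∃ k, q k ≠ 0)
    (ε : ℝ) (hε : 0 < ε) :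
    ∃ C > (0 : ℝ), ∀ lam : ℂ,
      1 / C ≤ sSup ((fun l : ℂ =>
          ‖(∑ k, MvPolynomial.eval ![l, (starRingEnd ℂ) l] (q k) *
            Complex.exp (l * α k - (starRingEnd ℂ) l * (starRingEnd ℂ) (α k)))‖) ''
        {l : ℂ | ‖(l - lam)‖ ≤ ε}) := by
  obtain ⟨k₀, hk₀⟩ := hq
  obtain ⟨m₀, hm₀, hdeg⟩ := (q k₀).support.exists_mem_eq_sup (support_nonempty.mpr hk₀)
    fun m => m.sum fun _ e => e
  set D := Finset.univ.sup fun k => (q k).totalDegree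
  have hD (k : Fin N) : (q k).totalDegree ≤ D :=
    Finset.le_sup (f := fun k => (q k).totalDegree) (Finset.mem_univ k)
  obtain ⟨C, hC, hbound⟩ := exists_norm_coeff_le_of_norm_conjExpPoly_le hα hε D k₀ m₀
  have hρ : 0 < ‖coeff m₀ (q k₀)‖ := norm_pos_iff.mpr (mem_support_iff.mp hm₀)
  refine ⟨C / ‖coeff m₀ (q k₀)‖, by positivity, fun lam => ?_⟩
  have hball : {l : ℂ | ‖l - lam‖ ≤ ε} = Metric.closedBall lam ε := by
    ext l; simp [dist_eq_norm]
  change _ ≤ sSup ((fun l => ‖conjExpPoly α q l‖) '' _)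
  rw [hball]
  have hshift := hbound (conjExpPolyShift α q lam)
    (fun k => (totalDegree_conjExpPolyShift_le α q lam k).trans (hD k)) _ fun z hz => by
      rw [← conjExpPoly_add]
      exact le_csSup ((isCompact_closedBall lam ε).bddAbove_image
        (continuous_conjExpPoly α q).norm.continuousOn) ⟨lam + z, by simpa using hz, rfl⟩
  rw [norm_coeff_conjExpPolyShift α q lam hdeg.le] at hshift
  rw [one_div_div, div_le_iff₀ hC]
  linarith

/-- The uniform lower bound (7.5) of the paper: an exponential polynomial in
`λ` and `conj λ` with purely imaginary exponents and not-all-zero polynomial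
coefficients is uniformly bounded below on ε-discs. -/
theorem exponential_polynomial_purely_imaginary_uniform_lower_bound
    (N : ℕ) (hN : 1 ≤ N) (α : Fin N → ℂ) (hα : Function.Injective α)
    (q : Fin N → MvPolynomial (Fin 2) ℂ) (hq : ∃ k, q k ≠ 0)
    (ε : ℝ) (hε : 0 < ε) :
    ∃ C > (0 : ℝ), ∀ lam : ℂ,
      1 / C ≤ sSup ((fun l : ℂ =>
          ‖(∑ k, MvPolynomial.eval ![l, (starRingEnd ℂ) l] (q k) *
            Complex.exp (l * α k - (starRingEnd ℂ) l * (starRingEnd ℂ) (α k)))‖) ''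
        {l : ℂ | ‖(l - lam)‖ ≤ ε}) :=
  exponential_polynomial_purely_imaginary_uniform_lower_bound_general N α hα q hq ε hε
end

section
/- Let Ω ⊆ ℂ be open, let σ : Ω → ℝ be of class C² with σ(z) > 0 for all z ∈ Ω, let λ ∈ ℂ, and define Q := (√σ)_{zz̄}/√σ and q₁ := (∂(√σ)/∂z)/√σ on Ω. Suppose μ : Ω → ℂ is of class C² and satisfies μ_{zz̄}(z) + λ·(∂μ/∂z̄)(z) = Q(z)·μ(z) on Ω. Define, for each choice of sign, u_±(z) := (∂μ/∂z)(z) + λ·μ(z) − q₁(z)·μ(z) ± e_{−λ}(z)·((∂(conj∘μ)/∂z)(z) − q₁(z)·conj(μ(z))). Then (∂u_±/∂z̄)(z) = ∓ e_{−λ}(z)·q₁(z)·conj(u_±(z)) for all z ∈ Ω. -/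
open Complex MeasureTheory Filter Topology

/-- Wirtinger derivative `∂f/∂z`. -/
noncomputable def wdz (f : ℂ → ℂ) (z : ℂ) : ℂ :=
  (1 / 2) * ((fderiv ℝ f z) 1 - Complex.I • (fderiv ℝ f z) Complex.I)

/-- Wirtinger derivative `∂f/∂z̄`. -/
noncomputable def wdzbar (f : ℂ → ℂ) (z : ℂ) : ℂ :=
  (1 / 2) * ((fderiv ℝ f z) 1 + Complex.I • (fderiv ℝ f z) Complex.I)

/-- `√σ` as a complex-valued function. -/
noncomputable def sqrtC (σ : ℂ → ℝ) (z : ℂ) : ℂ := (Real.sqrt (σ z) : ℂ)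

/-- The conductivity-type potential `Q = (√σ)_{z z̄} / √σ`. -/
noncomputable def Qpot (σ : ℂ → ℝ) (z : ℂ) : ℂ :=
  wdz (fun w => wdzbar (sqrtC σ) w) z / sqrtC σ z

/-- `g` has an `L^p` tail: `∫_{|z| ≥ 1} |g|^p dA < ∞`. -/
def HasLpTail (p : ℝ) (g : ℂ → ℂ) : Prop :=
  MeasureTheory.IntegrableOn (fun z => ‖g z‖ ^ p)
    {z : ℂ | 1 ≤ ‖z‖} MeasureTheory.volume

/-- `e_λ(z) = exp(λz - conj λ · conj z)`, a function of modulus 1. -/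
noncomputable def expPos (lam z : ℂ) : ℂ :=
  Complex.exp (lam * z - (starRingEnd ℂ) lam * (starRingEnd ℂ) z)

/-- `e_{-λ}(z) = exp(conj λ · conj z - λz)`, a function of modulus 1. -/
noncomputable def expNeg (lam z : ℂ) : ℂ :=
  Complex.exp ((starRingEnd ℂ) lam * (starRingEnd ℂ) z - lam * z)

/-- `q₁ = (∂√σ/∂z)/√σ`. -/
noncomputable def q1pot (σ : ℂ → ℝ) (z : ℂ) : ℂ := wdz (sqrtC σ) z / sqrtC σ z

/-!
Write `u_± = V ± e_{-λ} W` with `V = ∂μ + λμ - q₁μ` and `W = ∂μ̄ - q₁μ̄`. Because `√σ` is real,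
`Q` is real and `∂̄q₁ = Q - |q₁|²`; combined with the equation for `μ` and its complex conjugate
this gives `∂̄V = -q₁ W̄` and `∂̄(e_{-λ} W) = -e_{-λ} q₁ V̄` (the `λ`-terms cancel because
`∂̄ e_{-λ} = λ̄ e_{-λ}`). Since `|e_{-λ}| = 1` and `e = ±1`, the two identities combine to
`∂̄u_± = ∓ e_{-λ} q₁ ū_±`.
-/

open ComplexConjugate

section WirtingerCalculus

variable {f g : ℂ → ℂ} {z : ℂ}

lemma wdzbar_add (hf : DifferentiableAt ℝ f z) (hg : DifferentiableAt ℝ g z) :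
    wdzbar (fun w => f w + g w) z = wdzbar f z + wdzbar g z := by
  simp only [wdzbar, fderiv_fun_add hf hg, add_apply, smul_eq_mul]; ring

lemma wdzbar_sub (hf : DifferentiableAt ℝ f z) (hg : DifferentiableAt ℝ g z) :
    wdzbar (fun w => f w - g w) z = wdzbar f z - wdzbar g z := by
  simp only [wdzbar, fderiv_fun_sub hf hg, sub_apply, smul_eq_mul]; ring

lemma wdzbar_const_mul (hf : DifferentiableAt ℝ f z) (c : ℂ) :
    wdzbar (fun w => c * f w) z = c * wdzbar f z := by
  simp only [wdzbar, fderiv_const_mul hf c, smul_apply, smul_eq_mul]; ring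

lemma wdzbar_mul (hf : DifferentiableAt ℝ f z) (hg : DifferentiableAt ℝ g z) :
    wdzbar (fun w => f w * g w) z = wdzbar f z * g z + f z * wdzbar g z := by
  simp only [wdzbar, fderiv_fun_mul hf hg, add_apply, smul_apply, smul_eq_mul]; ring

lemma HasDerivAt.wdzbar_comp {g' : ℂ} (hg : HasDerivAt g g' (f z))
    (hf : DifferentiableAt ℝ f z) : wdzbar (fun w => g (f w)) z = g' * wdzbar f z := by
  have hgf : HasFDerivAt (fun w => g (f w)) _ z :=
    (hg.hasFDerivAt.restrictScalars ℝ).comp z hf.hasFDerivAt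
  rw [wdzbar, hgf.fderiv]
  simp only [ContinuousLinearMap.coe_comp, Function.comp_apply,
    ContinuousLinearMap.coe_restrictScalars', ContinuousLinearMap.toSpanSingleton_apply,
    smul_eq_mul, wdzbar]
  ring

lemma wdz_conj : wdz (fun w => conj (f w)) z = conj (wdzbar f z) := by
  rw [wdz, show (fun w => conj (f w)) = conjCLE ∘ f from rfl, conjCLE.comp_fderiv]
  simp only [ContinuousLinearMap.coe_comp, ContinuousLinearEquiv.coe_coe, Function.comp_apply,
    conjCLE_apply, wdzbar, smul_eq_mul, map_mul, map_add, conj_I, map_div₀, map_one, map_ofNat]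
  ring

lemma wdzbar_conj : wdzbar (fun w => conj (f w)) z = conj (wdz f z) := by
  rw [wdzbar, show (fun w => conj (f w)) = conjCLE ∘ f from rfl, conjCLE.comp_fderiv]
  simp only [ContinuousLinearMap.coe_comp, ContinuousLinearEquiv.coe_coe, Function.comp_apply,
    conjCLE_apply, wdz, smul_eq_mul, map_mul, map_sub, conj_I, map_div₀, map_one, map_ofNat]
  ring

lemma wdzbar_eq_conj_wdz_of_real (hf : ∀ w, conj (f w) = f w) :
    wdzbar f z = conj (wdz f z) := by
  rw [← wdzbar_conj, funext hf]

lemma wdzbar_wdz_conj :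
    wdzbar (fun w => wdz (fun x => conj (f x)) w) z = conj (wdz (fun w => wdzbar f w) z) := by
  simp only [wdz_conj, wdzbar_conj]

lemma wdz_id : wdz (fun w : ℂ => w) z = 1 := by
  simp only [wdz, fderiv_fun_id, ContinuousLinearMap.id_apply, smul_eq_mul, I_mul_I]
  norm_num

lemma wdzbar_id : wdzbar (fun w : ℂ => w) z = 0 := by
  simp [wdzbar]

lemma hasFDerivAt_fderiv_apply (hf : ContDiffAt ℝ 2 f z) (v : ℂ) :
    HasFDerivAt (fun w => fderiv ℝ f w v)
      ((ContinuousLinearMap.apply ℝ ℂ v).comp (fderiv ℝ (fderiv ℝ f) z)) z :=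
  (ContinuousLinearMap.apply ℝ ℂ v).hasFDerivAt.comp z
    ((hf.fderiv_right (m := 1) le_rfl).differentiableAt one_ne_zero).hasFDerivAt

lemma hasFDerivAt_wdz (hf : ContDiffAt ℝ 2 f z) :
    HasFDerivAt (fun w => wdz f w)
      ((1 / 2 : ℂ) • ((ContinuousLinearMap.apply ℝ ℂ 1).comp (fderiv ℝ (fderiv ℝ f) z) -
        I • (ContinuousLinearMap.apply ℝ ℂ I).comp (fderiv ℝ (fderiv ℝ f) z))) z :=
  (((hasFDerivAt_fderiv_apply hf 1).sub
    ((hasFDerivAt_fderiv_apply hf I).const_smul I)).const_smul (1 / 2 : ℂ)).congr_of_eventuallyEq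
    (.of_forall fun w => by simp [wdz])

lemma hasFDerivAt_wdzbar (hf : ContDiffAt ℝ 2 f z) :
    HasFDerivAt (fun w => wdzbar f w)
      ((1 / 2 : ℂ) • ((ContinuousLinearMap.apply ℝ ℂ 1).comp (fderiv ℝ (fderiv ℝ f) z) +
        I • (ContinuousLinearMap.apply ℝ ℂ I).comp (fderiv ℝ (fderiv ℝ f) z))) z :=
  (((hasFDerivAt_fderiv_apply hf 1).add
    ((hasFDerivAt_fderiv_apply hf I).const_smul I)).const_smul (1 / 2 : ℂ)).congr_of_eventuallyEq
    (.of_forall fun w => by simp [wdzbar])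

lemma differentiableAt_wdz (hf : ContDiffAt ℝ 2 f z) :
    DifferentiableAt ℝ (fun w => wdz f w) z :=
  (hasFDerivAt_wdz hf).differentiableAt

lemma wdzbar_wdz_comm (hf : ContDiffAt ℝ 2 f z) :
    wdzbar (fun w => wdz f w) z = wdz (fun w => wdzbar f w) z := by
  rw [wdzbar, wdz, (hasFDerivAt_wdz hf).fderiv, (hasFDerivAt_wdzbar hf).fderiv]
  simp only [smul_apply, sub_apply, add_apply, ContinuousLinearMap.coe_comp,
    Function.comp_apply, ContinuousLinearMap.apply_apply, smul_eq_mul]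
  rw [hf.isSymmSndFDerivAt (by simp) I 1]
  ring

lemma conj_wdz_wdzbar_of_real (hf : ContDiffAt ℝ 2 f z)
    (hreal : ∀ w, conj (f w) = f w) :
    conj (wdz (fun w => wdzbar f w) z) = wdz (fun w => wdzbar f w) z := by
  rw [← wdzbar_wdz_conj, funext hreal, wdzbar_wdz_comm hf]

lemma wdzbar_wdz_div_of_real (hf : ContDiffAt ℝ 2 f z)
    (hreal : ∀ w, conj (f w) = f w) (hz : f z ≠ 0) :
    wdzbar (fun w => wdz f w / f w) z =
      wdz (fun w => wdzbar f w) z / f z - wdz f z / f z * conj (wdz f z / f z) := by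
  have hfd : DifferentiableAt ℝ f z := hf.differentiableAt two_ne_zero
  simp only [div_eq_mul_inv]
  rw [wdzbar_mul (g := fun w => (f w)⁻¹) (differentiableAt_wdz hf) (hfd.inv hz),
    (hasDerivAt_inv hz).wdzbar_comp hfd, wdzbar_wdz_comm hf, wdzbar_eq_conj_wdz_of_real hreal,
    map_mul, map_inv₀, hreal]
  field_simp
  ring

end WirtingerCalculus

section ExpNeg

variable (lam z : ℂ)

lemma differentiableAt_conj : DifferentiableAt ℝ (fun w : ℂ => conj w) z :=
  conjCLE.differentiableAt

lemma differentiableAt_expNeg_exponent :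
    DifferentiableAt ℝ (fun w => conj lam * conj w - lam * w) z :=
  ((differentiableAt_conj z).const_mul _).sub (differentiableAt_fun_id.const_mul _)

lemma wdzbar_expNeg_exponent : wdzbar (fun w => conj lam * conj w - lam * w) z = conj lam := by
  rw [wdzbar_sub ((differentiableAt_conj z).const_mul _) (differentiableAt_fun_id.const_mul _),
    wdzbar_const_mul (differentiableAt_conj z), wdzbar_const_mul differentiableAt_fun_id,
    wdzbar_conj, wdz_id, wdzbar_id]
  simp

lemma differentiableAt_expNeg : DifferentiableAt ℝ (expNeg lam) z :=
  (differentiableAt_expNeg_exponent lam z).cexp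

lemma wdzbar_expNeg : wdzbar (expNeg lam) z = conj lam * expNeg lam z := by
  calc wdzbar (expNeg lam) z
      = expNeg lam z * wdzbar (fun w => conj lam * conj w - lam * w) z :=
        (hasDerivAt_exp _).wdzbar_comp (differentiableAt_expNeg_exponent lam z)
    _ = conj lam * expNeg lam z := by rw [wdzbar_expNeg_exponent, mul_comm]

lemma expNeg_mul_conj : expNeg lam z * conj (expNeg lam z) = 1 := by
  rw [expNeg, ← exp_conj, ← exp_add, map_sub, map_mul, map_mul, conj_conj, conj_conj,
    ← exp_zero]
  ring_nf

end ExpNeg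

section Potentials

variable {σ : ℂ → ℝ} {z : ℂ}

lemma conj_sqrtC (σ : ℂ → ℝ) (w : ℂ) : conj (sqrtC σ w) = sqrtC σ w :=
  conj_ofReal _

lemma sqrtC_ne_zero (hpos : 0 < σ z) : sqrtC σ z ≠ 0 :=
  ofReal_ne_zero.2 (Real.sqrt_pos.2 hpos).ne'

lemma contDiffAt_sqrtC (hσ : ContDiffAt ℝ 2 σ z) (hpos : 0 < σ z) :
    ContDiffAt ℝ 2 (sqrtC σ) z :=
  ofRealCLM.contDiff.contDiffAt.comp z (hσ.sqrt hpos.ne')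

lemma conj_Qpot (hσ : ContDiffAt ℝ 2 σ z) (hpos : 0 < σ z) : conj (Qpot σ z) = Qpot σ z := by
  rw [Qpot, map_div₀, conj_wdz_wdzbar_of_real (contDiffAt_sqrtC hσ hpos) (conj_sqrtC σ),
    conj_sqrtC]

lemma differentiableAt_q1pot (hσ : ContDiffAt ℝ 2 σ z) (hpos : 0 < σ z) :
    DifferentiableAt ℝ (q1pot σ) z := by
  unfold q1pot
  simp only [div_eq_mul_inv]
  exact (differentiableAt_wdz (contDiffAt_sqrtC hσ hpos)).mul
    (((contDiffAt_sqrtC hσ hpos).differentiableAt two_ne_zero).inv (sqrtC_ne_zero hpos))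

lemma wdzbar_q1pot (hσ : ContDiffAt ℝ 2 σ z) (hpos : 0 < σ z) :
    wdzbar (q1pot σ) z = Qpot σ z - q1pot σ z * conj (q1pot σ z) :=
  wdzbar_wdz_div_of_real (contDiffAt_sqrtC hσ hpos) (conj_sqrtC σ) (sqrtC_ne_zero hpos)

end Potentials

noncomputable def faddeevV (σ : ℂ → ℝ) (lam : ℂ) (μ : ℂ → ℂ) (w : ℂ) : ℂ :=
  wdz μ w + lam * μ w - q1pot σ w * μ w

noncomputable def faddeevW (σ : ℂ → ℝ) (μ : ℂ → ℂ) (w : ℂ) : ℂ :=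
  wdz (fun x => conj (μ x)) w - q1pot σ w * conj (μ w)

noncomputable def faddeevU (σ : ℂ → ℝ) (lam : ℂ) (μ : ℂ → ℂ) (e w : ℂ) : ℂ :=
  faddeevV σ lam μ w + e * (expNeg lam w * faddeevW σ μ w)

section Faddeev

variable {σ : ℂ → ℝ} {lam z : ℂ} {μ : ℂ → ℂ}

lemma differentiableAt_faddeevV (hσ : ContDiffAt ℝ 2 σ z) (hpos : 0 < σ z)
    (hμ : ContDiffAt ℝ 2 μ z) : DifferentiableAt ℝ (faddeevV σ lam μ) z := by
  have hμd : DifferentiableAt ℝ μ z := hμ.differentiableAt two_ne_zero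
  unfold faddeevV
  exact ((differentiableAt_wdz hμ).fun_add (hμd.const_mul lam)).fun_sub
    ((differentiableAt_q1pot hσ hpos).fun_mul hμd)

lemma differentiableAt_faddeevW (hσ : ContDiffAt ℝ 2 σ z) (hpos : 0 < σ z)
    (hμ : ContDiffAt ℝ 2 μ z) : DifferentiableAt ℝ (faddeevW σ μ) z := by
  have hconjμ : ContDiffAt ℝ 2 (fun w => conj (μ w)) z := conjCLE.contDiff.contDiffAt.comp z hμ
  unfold faddeevW
  exact (differentiableAt_wdz hconjμ).fun_sub
    ((differentiableAt_q1pot hσ hpos).fun_mul (hconjμ.differentiableAt two_ne_zero))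

lemma wdzbar_faddeevV (hσ : ContDiffAt ℝ 2 σ z) (hpos : 0 < σ z) (hμ : ContDiffAt ℝ 2 μ z)
    (heq : wdz (fun w => wdzbar μ w) z + lam * wdzbar μ z = Qpot σ z * μ z) :
    wdzbar (faddeevV σ lam μ) z = -(q1pot σ z * conj (faddeevW σ μ z)) := by
  have hμd : DifferentiableAt ℝ μ z := hμ.differentiableAt two_ne_zero
  unfold faddeevV
  rw [wdzbar_sub ((differentiableAt_wdz hμ).fun_add (hμd.const_mul lam))
      ((differentiableAt_q1pot hσ hpos).fun_mul hμd),
    wdzbar_add (differentiableAt_wdz hμ) (hμd.const_mul lam), wdzbar_const_mul hμd,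
    wdzbar_mul (differentiableAt_q1pot hσ hpos) hμd, wdzbar_wdz_comm hμ,
    wdzbar_q1pot hσ hpos, faddeevW, wdz_conj]
  simp only [map_sub, map_mul, conj_conj]
  linear_combination heq

lemma wdzbar_expNeg_mul_faddeevW (hσ : ContDiffAt ℝ 2 σ z) (hpos : 0 < σ z)
    (hμ : ContDiffAt ℝ 2 μ z)
    (heq : wdz (fun w => wdzbar μ w) z + lam * wdzbar μ z = Qpot σ z * μ z) :
    wdzbar (fun w => expNeg lam w * faddeevW σ μ w) z =
      -(expNeg lam z * q1pot σ z * conj (faddeevV σ lam μ z)) := by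
  have hconjμ : ContDiffAt ℝ 2 (fun w => conj (μ w)) z := conjCLE.contDiff.contDiffAt.comp z hμ
  rw [wdzbar_mul (differentiableAt_expNeg lam z) (differentiableAt_faddeevW hσ hpos hμ),
    wdzbar_expNeg]
  unfold faddeevW
  rw [wdzbar_sub (differentiableAt_wdz hconjμ)
      ((differentiableAt_q1pot hσ hpos).fun_mul (hconjμ.differentiableAt two_ne_zero)),
    wdzbar_wdz_conj, wdzbar_mul (differentiableAt_q1pot hσ hpos)
      (hconjμ.differentiableAt two_ne_zero), wdzbar_conj, wdzbar_q1pot hσ hpos, wdz_conj,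
    faddeevV]
  have hconj := congrArg conj heq
  simp only [map_add, map_sub, map_mul, conj_Qpot hσ hpos] at hconj ⊢
  linear_combination expNeg lam z * hconj

theorem wdzbar_faddeevU (hσ : ContDiffAt ℝ 2 σ z) (hpos : 0 < σ z) (hμ : ContDiffAt ℝ 2 μ z)
    (heq : wdz (fun w => wdzbar μ w) z + lam * wdzbar μ z = Qpot σ z * μ z)
    {e : ℂ} (he : e * conj e = 1) :
    wdzbar (faddeevU σ lam μ e) z =
      -e * (expNeg lam z * q1pot σ z * conj (faddeevU σ lam μ e z)) := by
  have hEW : DifferentiableAt ℝ (fun w => expNeg lam w * faddeevW σ μ w) z :=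
    (differentiableAt_expNeg lam z).fun_mul (differentiableAt_faddeevW hσ hpos hμ)
  unfold faddeevU
  rw [wdzbar_add (differentiableAt_faddeevV hσ hpos hμ) (hEW.const_mul e), wdzbar_const_mul hEW,
    wdzbar_faddeevV hσ hpos hμ heq, wdzbar_expNeg_mul_faddeevW hσ hpos hμ heq]
  simp only [map_add, map_mul]
  linear_combination (q1pot σ z * conj (faddeevW σ μ z)) *
    (e * conj e * expNeg_mul_conj lam z + he)

end Faddeev

/-- Lemmas 2.1–2.3 combined, planar case: the Faddeev-type equation for `μ`
implies the Bers–Vekua equation (2.7) for `u_± = ∂μ + λμ − q₁μ ± e_{-λ}(∂(conj μ) − q₁ conj μ)`.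
The sign `±` is encoded by `e ∈ {1, -1}`. -/
theorem faddeev_to_bers_vekua_planar
    (Ω : Set ℂ) (hΩ : IsOpen Ω) (σ : ℂ → ℝ) (hσ : ContDiffOn ℝ 2 σ Ω)
    (hpos : ∀ z ∈ Ω, 0 < σ z) (lam : ℂ) (μ : ℂ → ℂ) (hμ : ContDiffOn ℝ 2 μ Ω)
    (heq : ∀ z ∈ Ω, wdz (fun w => wdzbar μ w) z + lam * wdzbar μ z = Qpot σ z * μ z)
    (e : ℂ) (he : e = 1 ∨ e = -1) :
    ∀ z ∈ Ω,
      wdzbar (fun w => wdz μ w + lam * μ w - q1pot σ w * μ w +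
          e * (expNeg lam w *
            (wdz (fun x => (starRingEnd ℂ) (μ x)) w - q1pot σ w * (starRingEnd ℂ) (μ w)))) z =
        -e * (expNeg lam z * q1pot σ z *
          (starRingEnd ℂ) (wdz μ z + lam * μ z - q1pot σ z * μ z +
            e * (expNeg lam z *
              (wdz (fun x => (starRingEnd ℂ) (μ x)) z - q1pot σ z * (starRingEnd ℂ) (μ z))))) := by
  intro z hz
  have he_unit : e * conj e = 1 := by rcases he with rfl | rfl <;> simp
  exact wdzbar_faddeevU (hσ.contDiffAt (hΩ.mem_nhds hz)) (hpos z hz)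
    (hμ.contDiffAt (hΩ.mem_nhds hz)) (heq z hz) he_unit
end

section
/- Let λ ∈ ℂ and R₀ > 0, and let μ be a C² complex-valued function on the exterior domain {z ∈ ℂ : |z| > R₀} satisfying μ_{zz̄}(z) + λ·(∂μ/∂z̄)(z) = 0 there. Then the function z ↦ (∂μ/∂z)(z) + λ·μ(z) is holomorphic on {z : |z| > R₀}, and the function z ↦ conj(e_{λ}(z)·(∂μ/∂z̄)(z)) is holomorphic on {z : |z| > R₀} (i.e., e_{λ}·∂μ/∂z̄ is antiholomorphic there). -/
open Complex MeasureTheory Filter Topology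

/-!
By symmetry of second derivatives `∂̄∂μ = ∂∂̄μ`, so `∂̄(∂μ + λμ) = μ_{zz̄} + λ ∂̄μ = 0`, and a
real-differentiable function with `∂̄f = 0` is holomorphic (Cauchy–Riemann). Since `∂e_λ = λ e_λ`,
the product rule gives `∂(e_λ ∂̄μ) = e_λ (μ_{zz̄} + λ ∂̄μ) = 0`, and `∂̄ conj(g) = conj(∂g)`.
-/

open ComplexConjugate

section Wirtinger

variable {f g : ℂ → ℂ} {L : ℂ →L[ℝ] ℂ} {z : ℂ}

theorem HasFDerivAt.wdz_eq (h : HasFDerivAt f L z) : wdz f z = 1 / 2 * (L 1 - I * L I) := by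
  rw [wdz, h.fderiv, smul_eq_mul]

theorem HasFDerivAt.wdzbar_eq (h : HasFDerivAt f L z) : wdzbar f z = 1 / 2 * (L 1 + I * L I) := by
  rw [wdzbar, h.fderiv, smul_eq_mul]

theorem differentiableAt_complex_iff_wdzbar_eq_zero :
    DifferentiableAt ℂ f z ↔ DifferentiableAt ℝ f z ∧ wdzbar f z = 0 := by
  rw [differentiableAt_complex_iff_differentiableAt_real, wdzbar, smul_eq_mul, smul_eq_mul]
  refine and_congr_right fun _ => ⟨fun h => ?_, fun h => ?_⟩
  · rw [h]; linear_combination fderiv ℝ f z 1 / 2 * I_mul_I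
  · linear_combination (-2 * I) * h + fderiv ℝ f z I * I_mul_I

theorem wdzbar_conj_comp (hf : DifferentiableAt ℝ f z) :
    wdzbar (fun w => conj (f w)) z = conj (wdz f z) := by
  have h : HasFDerivAt (fun w => conj (f w)) ((conjCLE : ℂ →L[ℝ] ℂ).comp (fderiv ℝ f z)) z :=
    conjCLE.hasFDerivAt.comp z hf.hasFDerivAt
  rw [h.wdzbar_eq, hf.hasFDerivAt.wdz_eq]
  simp only [ContinuousLinearMap.comp_apply, ContinuousLinearEquiv.coe_coe, conjCLE_apply,
    map_mul, map_sub, conj_I, map_div₀, map_one, map_ofNat]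
  ring

theorem differentiableAt_complex_conj_of_wdz_eq_zero (hf : DifferentiableAt ℝ f z)
    (h : wdz f z = 0) : DifferentiableAt ℂ (fun w => conj (f w)) z :=
  differentiableAt_complex_iff_wdzbar_eq_zero.2
    ⟨(conjCLE.differentiableAt).comp z hf, by rw [wdzbar_conj_comp hf, h, map_zero]⟩

theorem wdzbar_add_const_mul (hf : DifferentiableAt ℝ f z) (hg : DifferentiableAt ℝ g z) (c : ℂ) :
    wdzbar (fun w => f w + c * g w) z = wdzbar f z + c * wdzbar g z := by
  rw [HasFDerivAt.wdzbar_eq (f := fun w => f w + c * g w)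
      (hf.hasFDerivAt.add (hg.hasFDerivAt.const_mul c)), hf.hasFDerivAt.wdzbar_eq,
    hg.hasFDerivAt.wdzbar_eq]
  simp only [add_apply, smul_apply, smul_eq_mul]
  ring

theorem wdz_mul (hf : DifferentiableAt ℝ f z) (hg : DifferentiableAt ℝ g z) :
    wdz (fun w => f w * g w) z = wdz f z * g z + f z * wdz g z := by
  rw [HasFDerivAt.wdz_eq (f := fun w => f w * g w) (hf.hasFDerivAt.mul hg.hasFDerivAt), hf.hasFDerivAt.wdz_eq, hg.hasFDerivAt.wdz_eq]
  simp only [add_apply, smul_apply, smul_eq_mul]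
  ring

end Wirtinger

section SecondOrder

variable {f : ℂ → ℂ} {F : ℂ →L[ℝ] ℂ →L[ℝ] ℂ} {z : ℂ}

theorem hasFDerivAt_wdz_s11 (h : HasFDerivAt (fderiv ℝ f) F z) :
    HasFDerivAt (wdz f) ((1 / 2 : ℂ) • (F.flip 1 - I • F.flip I)) z := by
  have happly (v : ℂ) : HasFDerivAt (fun w => fderiv ℝ f w v) (F.flip v) z := by
    simpa using h.clm_apply (hasFDerivAt_const v z)
  exact ((happly 1).sub ((happly I).const_smul I)).const_mul (1 / 2 : ℂ)

theorem hasFDerivAt_wdzbar_s11 (h : HasFDerivAt (fderiv ℝ f) F z) :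
    HasFDerivAt (wdzbar f) ((1 / 2 : ℂ) • (F.flip 1 + I • F.flip I)) z := by
  have happly (v : ℂ) : HasFDerivAt (fun w => fderiv ℝ f w v) (F.flip v) z := by
    simpa using h.clm_apply (hasFDerivAt_const v z)
  exact ((happly 1).add ((happly I).const_smul I)).const_mul (1 / 2 : ℂ)

theorem ContDiffAt.hasFDerivAt_fderiv (hf : ContDiffAt ℝ 2 f z) :
    HasFDerivAt (fderiv ℝ f) (fderiv ℝ (fderiv ℝ f) z) z :=
  ((hf.fderiv_right (by norm_num)).differentiableAt one_ne_zero).hasFDerivAt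

theorem ContDiffAt.wdzbar_wdz_eq_wdz_wdzbar (hf : ContDiffAt ℝ 2 f z) :
    wdzbar (wdz f) z = wdz (wdzbar f) z := by
  have hsymm := hf.isSymmSndFDerivAt (by simp) 1 I
  rw [(hasFDerivAt_wdz_s11 hf.hasFDerivAt_fderiv).wdzbar_eq,
    (hasFDerivAt_wdzbar_s11 hf.hasFDerivAt_fderiv).wdz_eq]
  simp only [add_apply, sub_apply,
    smul_apply, ContinuousLinearMap.flip_apply, smul_eq_mul]
  linear_combination (-I / 2) * hsymm

end SecondOrder

theorem hasFDerivAt_expPos (lam z : ℂ) :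
    HasFDerivAt (expPos lam)
      (expPos lam z • (lam • ContinuousLinearMap.id ℝ ℂ - conj lam • (conjCLE : ℂ →L[ℝ] ℂ))) z :=
  (((hasFDerivAt_id z).const_mul lam).sub (conjCLE.hasFDerivAt.const_mul (conj lam))).cexp

theorem wdz_expPos (lam z : ℂ) : wdz (expPos lam) z = lam * expPos lam z := by
  rw [(hasFDerivAt_expPos lam z).wdz_eq]
  simp only [smul_apply, sub_apply,
    ContinuousLinearMap.id_apply, ContinuousLinearEquiv.coe_coe, conjCLE_apply, map_one,
    conj_I, smul_eq_mul]
  linear_combination (-expPos lam z * (lam + conj lam) / 2) * I_mul_I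

section Faddeev

variable {lam z : ℂ} {μ : ℂ → ℂ}

theorem ContDiffAt.differentiableAt_complex_wdz_add_const_mul (hμ : ContDiffAt ℝ 2 μ z)
    (heq : wdz (wdzbar μ) z + lam * wdzbar μ z = 0) :
    DifferentiableAt ℂ (fun w => wdz μ w + lam * μ w) z := by
  have hwdz : DifferentiableAt ℝ (wdz μ) z := (hasFDerivAt_wdz_s11 hμ.hasFDerivAt_fderiv).differentiableAt
  have hμ₁ : DifferentiableAt ℝ μ z := hμ.differentiableAt (by norm_num)
  refine differentiableAt_complex_iff_wdzbar_eq_zero.2 ⟨hwdz.add (hμ₁.const_mul lam), ?_⟩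
  rw [wdzbar_add_const_mul hwdz hμ₁, hμ.wdzbar_wdz_eq_wdz_wdzbar, heq]

theorem ContDiffAt.differentiableAt_complex_conj_expPos_mul_wdzbar (hμ : ContDiffAt ℝ 2 μ z)
    (heq : wdz (wdzbar μ) z + lam * wdzbar μ z = 0) :
    DifferentiableAt ℂ (fun w => conj (expPos lam w * wdzbar μ w)) z := by
  have he : DifferentiableAt ℝ (expPos lam) z := (hasFDerivAt_expPos lam z).differentiableAt
  have hwdzbar : DifferentiableAt ℝ (wdzbar μ) z :=
    (hasFDerivAt_wdzbar_s11 hμ.hasFDerivAt_fderiv).differentiableAt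
  refine differentiableAt_complex_conj_of_wdz_eq_zero (he.mul hwdzbar) ?_
  rw [wdz_mul he hwdzbar, wdz_expPos]
  linear_combination expPos lam z * heq

end Faddeev

theorem faddeev_holomorphic_antiholomorphic_exterior_general
    (lam : ℂ) (R0 : ℝ) (μ : ℂ → ℂ)
    (hμ : ContDiffOn ℝ 2 μ {z : ℂ | R0 < ‖z‖})
    (heq : ∀ z ∈ {z : ℂ | R0 < ‖z‖},
      wdz (fun w => wdzbar μ w) z + lam * wdzbar μ z = 0) :
    DifferentiableOn ℂ (fun z => wdz μ z + lam * μ z)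
      {z : ℂ | R0 < ‖z‖} ∧
    DifferentiableOn ℂ (fun z => (starRingEnd ℂ) (expPos lam z * wdzbar μ z))
      {z : ℂ | R0 < ‖z‖} := by
  have hopen : IsOpen {z : ℂ | R0 < ‖z‖} := isOpen_lt continuous_const continuous_norm
  have hμz : ∀ z ∈ {z : ℂ | R0 < ‖z‖}, ContDiffAt ℝ 2 μ z :=
    fun z hz => hμ.contDiffAt (hopen.mem_nhds hz)
  exact ⟨fun z hz => ((hμz z hz).differentiableAt_complex_wdz_add_const_mul
      (heq z hz)).differentiableWithinAt,
    fun z hz => ((hμz z hz).differentiableAt_complex_conj_expPos_mul_wdzbar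
      (heq z hz)).differentiableWithinAt⟩

/-- Lemma 4.1(i), planar case: on an exterior domain where
`μ_{z z̄} + λ ∂̄μ = 0`, the function `∂μ + λμ` is holomorphic and
`e_λ · ∂̄μ` is antiholomorphic. -/
theorem faddeev_holomorphic_antiholomorphic_exterior
    (lam : ℂ) (R0 : ℝ) (hR0 : 0 < R0) (μ : ℂ → ℂ)
    (hμ : ContDiffOn ℝ 2 μ {z : ℂ | R0 < ‖z‖})
    (heq : ∀ z ∈ {z : ℂ | R0 < ‖z‖},
      wdz (fun w => wdzbar μ w) z + lam * wdzbar μ z = 0) :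
    DifferentiableOn ℂ (fun z => wdz μ z + lam * μ z)
      {z : ℂ | R0 < ‖z‖} ∧
    DifferentiableOn ℂ (fun z => (starRingEnd ℂ) (expPos lam z * wdzbar μ z))
      {z : ℂ | R0 < ‖z‖} :=
  faddeev_holomorphic_antiholomorphic_exterior_general lam R0 μ hμ heq
end
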